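/- arXiv:2103.15560 — 2 statements merged into one kernel-verified Lean document; each statement's English description precedes it below -/
import Mathlib

section
/- For n ≥ 6 with 3 | n, the metric dimension of the graph H(n) is n − n/3. -/
open SimpleGraph

/-- `Q` is a resolving set of `G`: distinct vertices have distinct distance vectors to `Q`. -/
def IsResolving {V : Type*} (G : SimpleGraph V) (Q : Finset V) : Prop :=
  ∀ x y : V, (∀ q ∈ Q, G.dist x q = G.dist y q) → x = y

/-- `Q` is a doubly resolving set of `G`. -/
def IsDoublyResolving {V : Type*} (G : SimpleGraph V) (Q : Finset V) : Prop :=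
  ∀ x y : V, x ≠ y → ∃ u ∈ Q, ∃ v ∈ Q,
    (G.dist x u : ℤ) - (G.dist x v : ℤ) ≠ (G.dist y u : ℤ) - (G.dist y v : ℤ)

/-- `Q` is a strong resolving set of `G`: for distinct `p q` some `r ∈ Q` has
`p` on a shortest `q`–`r` path or `q` on a shortest `p`–`r` path. -/
def IsStrongResolving {V : Type*} (G : SimpleGraph V) (Q : Finset V) : Prop :=
  ∀ p q : V, p ≠ q → ∃ r ∈ Q,
    G.dist q r = G.dist q p + G.dist p r ∨ G.dist p r = G.dist p q + G.dist q r

/-- The graph `H(n)`: the incidence graph of the complete graph `K_n`. -/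
def Hgraph (n : ℕ) : SimpleGraph (Fin n ⊕ {s : Finset (Fin n) // s.card = 2}) :=
  SimpleGraph.fromRel (fun a b => ∃ r s, a = Sum.inl r ∧ b = Sum.inr s ∧ r ∈ s.1)

abbrev ES (n : ℕ) := {s : Finset (Fin n) // s.card = 2}

variable {n : ℕ}

lemma hadj_lr {i : Fin n} {s : ES n} : (Hgraph n).Adj (Sum.inl i) (Sum.inr s) ↔ i ∈ s.1 := by
  constructor
  · rintro ⟨-, (⟨r, t, hr, ht, hm⟩ | ⟨r, t, ht, hr, hm⟩)⟩
    · cases hr; cases ht; exact hm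
    · exact (Sum.inr_ne_inl ht).elim
  · intro hm
    exact ⟨by simp, Or.inl ⟨i, s, rfl, rfl, hm⟩⟩

lemma hadj_rl {i : Fin n} {s : ES n} : (Hgraph n).Adj (Sum.inr s) (Sum.inl i) ↔ i ∈ s.1 := by
  rw [SimpleGraph.adj_comm]; exact hadj_lr

lemma hadj_ll {i j : Fin n} : ¬ (Hgraph n).Adj (Sum.inl i) (Sum.inl j) := by
  simp [Hgraph, fromRel_adj]

lemma hadj_rr {s t : ES n} : ¬ (Hgraph n).Adj (Sum.inr s) (Sum.inr t) := by
  simp [Hgraph, fromRel_adj]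

def par : Fin n ⊕ ES n → ℕ := Sum.elim (fun _ => 0) (fun _ => 1)

lemma adj_par {x y : Fin n ⊕ ES n} (h : (Hgraph n).Adj x y) : par x + par y = 1 := by
  cases x <;> cases y <;> simp [par] at *
  · exact hadj_ll h
  · exact hadj_rr h

lemma walk_par {x y : Fin n ⊕ ES n} (w : (Hgraph n).Walk x y) :
    (w.length + par x + par y) % 2 = 0 := by
  induction w with
  | nil => simp [SimpleGraph.Walk.length_nil]; omega
  | cons h p ih =>
    rw [SimpleGraph.Walk.length_cons]
    have := adj_par h
    omega

lemma dist_lr_mem {i : Fin n} {s : ES n} (h : i ∈ s.1) :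
    (Hgraph n).dist (Sum.inl i) (Sum.inr s) = 1 :=
  SimpleGraph.dist_eq_one_iff_adj.2 (hadj_lr.2 h)

lemma dist_ll {i j : Fin n} (h : i ≠ j) :
    (Hgraph n).dist (Sum.inl i) (Sum.inl j) = 2 := by
  let w : (Hgraph n).Walk (Sum.inl i) (Sum.inl j) :=
    .cons (hadj_lr (s := ⟨{i, j}, Finset.card_pair h⟩).2 (by simp))
      (.cons (hadj_rl.2 (by simp)) .nil)
  have hwl : w.length = 2 := rfl
  have h2 := hwl ▸ SimpleGraph.dist_le w
  have hr : (Hgraph n).Reachable (Sum.inl i) (Sum.inl j) := ⟨w⟩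
  have h0 : (Hgraph n).dist (Sum.inl i) (Sum.inl j) ≠ 0 := by
    rw [ne_eq, hr.dist_eq_zero_iff]; simpa using h
  have h1 : (Hgraph n).dist (Sum.inl i) (Sum.inl j) ≠ 1 := by
    rw [ne_eq, SimpleGraph.dist_eq_one_iff_adj]; exact hadj_ll
  omega

lemma dist_lr_not {i : Fin n} {s : ES n} (h : i ∉ s.1) :
    (Hgraph n).dist (Sum.inl i) (Sum.inr s) = 3 := by
  obtain ⟨j, hj⟩ : s.1.Nonempty := Finset.card_pos.1 (by rw [s.2]; omega)
  have hij : i ≠ j := fun he => h (he ▸ hj)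
  let w : (Hgraph n).Walk (Sum.inl i) (Sum.inr s) :=
    .cons (hadj_lr (s := ⟨{i, j}, Finset.card_pair hij⟩).2 (by simp))
      (.cons (hadj_rl.2 (by simp)) (.cons (hadj_lr.2 hj) .nil))
  have hwl : w.length = 3 := rfl
  have h2 := hwl ▸ SimpleGraph.dist_le w
  have hr : (Hgraph n).Reachable (Sum.inl i) (Sum.inr s) := ⟨w⟩
  have h0 : (Hgraph n).dist (Sum.inl i) (Sum.inr s) ≠ 0 := by
    rw [ne_eq, hr.dist_eq_zero_iff]; simp
  have h1 : (Hgraph n).dist (Sum.inl i) (Sum.inr s) ≠ 1 := by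
    rw [ne_eq, SimpleGraph.dist_eq_one_iff_adj, hadj_lr]; exact h
  obtain ⟨p, hp⟩ := hr.exists_walk_length_eq_dist
  have hpar := walk_par p
  simp only [par, Sum.elim_inl, Sum.elim_inr] at hpar
  omega

lemma dist_rr_meet {s t : ES n} (hst : s ≠ t) {k : Fin n} (hks : k ∈ s.1) (hkt : k ∈ t.1) :
    (Hgraph n).dist (Sum.inr s) (Sum.inr t) = 2 := by
  let w : (Hgraph n).Walk (Sum.inr s) (Sum.inr t) :=
    .cons (hadj_rl.2 hks) (.cons (hadj_lr.2 hkt) .nil)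
  have hwl : w.length = 2 := rfl
  have h2 := hwl ▸ SimpleGraph.dist_le w
  have hr : (Hgraph n).Reachable (Sum.inr s) (Sum.inr t) := ⟨w⟩
  have h0 : (Hgraph n).dist (Sum.inr s) (Sum.inr t) ≠ 0 := by
    rw [ne_eq, hr.dist_eq_zero_iff]; simpa using hst
  have h1 : (Hgraph n).dist (Sum.inr s) (Sum.inr t) ≠ 1 := by
    rw [ne_eq, SimpleGraph.dist_eq_one_iff_adj]; exact hadj_rr
  omega

lemma dist_rr_disj {s t : ES n} (hst : s.1 ∩ t.1 = ∅) :
    (Hgraph n).dist (Sum.inr s) (Sum.inr t) = 4 := by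
  obtain ⟨i, hi⟩ : s.1.Nonempty := Finset.card_pos.1 (by rw [s.2]; omega)
  obtain ⟨j, hj⟩ : t.1.Nonempty := Finset.card_pos.1 (by rw [t.2]; omega)
  have hij : i ≠ j := by
    intro he; have : i ∈ s.1 ∩ t.1 := Finset.mem_inter.2 ⟨hi, he ▸ hj⟩
    rw [hst] at this; exact absurd this (Finset.notMem_empty _)
  have hstne : s ≠ t := by
    intro he; have : i ∈ s.1 ∩ t.1 := Finset.mem_inter.2 ⟨hi, he ▸ hi⟩
    rw [hst] at this; exact absurd this (Finset.notMem_empty _)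
  let w : (Hgraph n).Walk (Sum.inr s) (Sum.inr t) :=
    .cons (hadj_rl.2 hi)
      (.cons (hadj_lr (s := ⟨{i, j}, Finset.card_pair hij⟩).2 (by simp))
        (.cons (hadj_rl.2 (by simp)) (.cons (hadj_lr.2 hj) .nil)))
  have hwl : w.length = 4 := rfl
  have h4 := hwl ▸ SimpleGraph.dist_le w
  have hr : (Hgraph n).Reachable (Sum.inr s) (Sum.inr t) := ⟨w⟩
  have h0 : (Hgraph n).dist (Sum.inr s) (Sum.inr t) ≠ 0 := by
    rw [ne_eq, hr.dist_eq_zero_iff]; simpa [Subtype.ext_iff] using fun he => hstne (Subtype.ext he)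
  obtain ⟨p, hp⟩ := hr.exists_walk_length_eq_dist
  have hpar := walk_par p
  simp only [par, Sum.elim_inl, Sum.elim_inr] at hpar
  have h2 : (Hgraph n).dist (Sum.inr s) (Sum.inr t) ≠ 2 := by
    intro hd
    rw [hd] at hp
    cases p with
    | nil => simp at hp
    | cons ha q =>
      cases q with
      | nil => simp at hp
      | cons hb r =>
        simp only [SimpleGraph.Walk.length_cons] at hp
        have hr0 : r.length = 0 := by omega
        have hceq := SimpleGraph.Walk.eq_of_length_eq_zero hr0
        rename_i b c
        subst hceq
        cases b with
        | inl k =>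
          have hks := hadj_rl.1 ha
          have hkt := hadj_lr.1 hb
          have : k ∈ s.1 ∩ t.1 := Finset.mem_inter.2 ⟨hks, hkt⟩
          rw [hst] at this; exact absurd this (Finset.notMem_empty _)
        | inr u => exact hadj_rr ha
  omega

open Finset in
lemma LBcount (h3 : 3 ∣ n) (A : Finset (Fin n)) (B : Finset (ES n))
    (HP : ∀ i j : Fin n, i ∉ A → j ∉ A → i ≠ j → ∃ e ∈ B, ¬(i ∈ e.1 ↔ j ∈ e.1)) :
    n - n / 3 ≤ A.card + B.card := by
  classical
  set deg : Fin n → ℕ := fun i => (B.filter (fun e => i ∈ e.1)).card with hdeg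
  have hsum : ∑ i : Fin n, deg i = 2 * B.card := by
    calc ∑ i : Fin n, deg i
        = ∑ i : Fin n, ∑ e ∈ B, if i ∈ e.1 then 1 else 0 := by
          simp only [hdeg, Finset.card_filter]
      _ = ∑ e ∈ B, ∑ i : Fin n, if i ∈ e.1 then 1 else 0 := Finset.sum_comm
      _ = ∑ e ∈ B, (e.1).card := by
          refine Finset.sum_congr rfl fun e _ => ?_
          rw [← Finset.card_filter]
          congr 1
          exact Finset.filter_univ_mem _
      _ = ∑ _e ∈ B, 2 := Finset.sum_congr rfl fun e _ => e.2
      _ = 2 * B.card := by rw [Finset.sum_const, smul_eq_mul, mul_comm]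
  set D0 := Finset.univ.filter (fun i : Fin n => i ∉ A ∧ deg i = 0) with hD0def
  set D1 := Finset.univ.filter (fun i : Fin n => i ∉ A ∧ deg i = 1) with hD1def
  set D2 := Finset.univ.filter (fun i : Fin n => i ∉ A ∧ 2 ≤ deg i) with hD2def
  have hcover : n ≤ A.card + D0.card + D1.card + D2.card := by
    have hsub : (Finset.univ : Finset (Fin n)) ⊆ A ∪ D0 ∪ D1 ∪ D2 := by
      intro i _
      simp only [Finset.mem_union, hD0def, hD1def, hD2def, Finset.mem_filter,
        Finset.mem_univ, true_and]
      by_cases hA : i ∈ A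
      · tauto
      · have : deg i = 0 ∨ deg i = 1 ∨ 2 ≤ deg i := by omega
        tauto
    calc n = (Finset.univ : Finset (Fin n)).card := by simp
      _ ≤ (A ∪ D0 ∪ D1 ∪ D2).card := Finset.card_le_card hsub
      _ ≤ (A ∪ D0 ∪ D1).card + D2.card := Finset.card_union_le _ _
      _ ≤ (A ∪ D0).card + D1.card + D2.card := by
          have := Finset.card_union_le (A ∪ D0) D1; omega
      _ ≤ A.card + D0.card + D1.card + D2.card := by
          have := Finset.card_union_le A D0; omega
  have hD0 : D0.card ≤ 1 := by
    rw [Finset.card_le_one]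
    intro a ha b hb
    simp only [hD0def, Finset.mem_filter, Finset.mem_univ, true_and] at ha hb
    by_contra hne
    obtain ⟨e, heB, hxor⟩ := HP a b ha.1 hb.1 hne
    by_cases hae : a ∈ e.1
    · have : e ∈ B.filter (fun f => a ∈ f.1) := Finset.mem_filter.2 ⟨heB, hae⟩
      rw [Finset.card_eq_zero.1 ha.2] at this
      exact absurd this (Finset.notMem_empty _)
    · have hbe : b ∈ e.1 := by tauto
      have : e ∈ B.filter (fun f => b ∈ f.1) := Finset.mem_filter.2 ⟨heB, hbe⟩
      rw [Finset.card_eq_zero.1 hb.2] at this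
      exact absurd this (Finset.notMem_empty _)
  have hD1B : D1.card ≤ B.card := by
    have h1 : ∀ e ∈ B, (D1.filter (fun i => i ∈ e.1)).card ≤ 1 := by
      intro e heB
      rw [Finset.card_le_one]
      intro a ha b hb
      simp only [Finset.mem_filter, hD1def, Finset.mem_univ, true_and] at ha hb
      obtain ⟨⟨haA, hda⟩, hae⟩ := ha
      obtain ⟨⟨hbA, hdb⟩, hbe⟩ := hb
      by_contra hne
      obtain ⟨e', he'B, hxor⟩ := HP a b haA hbA hne
      by_cases hae' : a ∈ e'.1
      · have h5 : e' = e := by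
          have hmem1 : e ∈ B.filter (fun f => a ∈ f.1) := Finset.mem_filter.2 ⟨heB, hae⟩
          have hmem2 : e' ∈ B.filter (fun f => a ∈ f.1) := Finset.mem_filter.2 ⟨he'B, hae'⟩
          exact Finset.card_le_one.1 (le_of_eq hda) _ hmem2 _ hmem1
        exact hxor (h5 ▸ iff_of_true (h5 ▸ hae') (h5 ▸ hbe))
      · have hbe' : b ∈ e'.1 := by tauto
        have h5 : e' = e := by
          have hmem1 : e ∈ B.filter (fun f => b ∈ f.1) := Finset.mem_filter.2 ⟨heB, hbe⟩
          have hmem2 : e' ∈ B.filter (fun f => b ∈ f.1) := Finset.mem_filter.2 ⟨he'B, hbe'⟩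
          exact Finset.card_le_one.1 (le_of_eq hdb) _ hmem2 _ hmem1
        exact hxor (iff_of_true (h5 ▸ hae) hbe')
    calc D1.card = ∑ i ∈ D1, deg i := by
          rw [Finset.card_eq_sum_ones]
          refine Finset.sum_congr rfl fun i hi => ?_
          simp only [hD1def, Finset.mem_filter] at hi
          exact hi.2.2.symm
      _ = ∑ i ∈ D1, ∑ e ∈ B, if i ∈ e.1 then 1 else 0 := by
          simp only [hdeg, Finset.card_filter]
      _ = ∑ e ∈ B, ∑ i ∈ D1, if i ∈ e.1 then 1 else 0 := Finset.sum_comm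
      _ = ∑ e ∈ B, (D1.filter (fun i => i ∈ e.1)).card := by
          simp only [Finset.card_filter]
      _ ≤ ∑ _e ∈ B, 1 := Finset.sum_le_sum h1
      _ = B.card := by simp
  have hkey : D1.card + 2 * D2.card ≤ 2 * B.card := by
    rw [← hsum]
    have hdisj : Disjoint D1 D2 := by
      rw [Finset.disjoint_left]
      intro a h1 h2
      simp only [hD1def, hD2def, Finset.mem_filter, Finset.mem_univ, true_and] at h1 h2
      omega
    have hle : ∑ i ∈ D1 ∪ D2, deg i ≤ ∑ i : Fin n, deg i :=
      Finset.sum_le_sum_of_subset (Finset.subset_univ _)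
    rw [Finset.sum_union hdisj] at hle
    have e1 : ∑ i ∈ D1, deg i = D1.card := by
      rw [Finset.card_eq_sum_ones]
      refine Finset.sum_congr rfl fun i hi => ?_
      simp only [hD1def, Finset.mem_filter] at hi
      exact hi.2.2
    have e2 : D2.card * 2 ≤ ∑ i ∈ D2, deg i := by
      have := Finset.card_nsmul_le_sum D2 deg 2 (fun i hi => by
        simp only [hD2def, Finset.mem_filter] at hi; exact hi.2.2)
      simpa [smul_eq_mul] using this
    omega
  obtain ⟨t, ht⟩ := h3
  have hdiv : n / 3 = t := by omega
  omega

def Bedge (n m : ℕ) (h : 3*(m/2)+m%2+1 < n) : ES n :=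
  ⟨{⟨3*(m/2)+m%2, by omega⟩, ⟨3*(m/2)+m%2+1, h⟩},
   Finset.card_pair (by simp [Fin.ext_iff])⟩

lemma mem_Bedge {m : ℕ} {h : 3*(m/2)+m%2+1 < n} {i : Fin n} :
    i ∈ (Bedge n m h).1 ↔ (i.val = 3*(m/2)+m%2 ∨ i.val = 3*(m/2)+m%2+1) := by
  simp [Bedge, Fin.ext_iff]

lemma Bedge_inj {m m' : ℕ} {h : 3*(m/2)+m%2+1 < n} {h' : 3*(m'/2)+m'%2+1 < n}
    (he : Bedge n m h = Bedge n m' h') : m = m' := by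
  have h1 : (⟨3*(m/2)+m%2, by omega⟩ : Fin n) ∈ (Bedge n m' h').1 := by
    rw [← he]; simp [Bedge]
  have h2 : (⟨3*(m'/2)+m'%2, by omega⟩ : Fin n) ∈ (Bedge n m h).1 := by
    rw [he]; simp [Bedge]
  rw [mem_Bedge] at h1 h2
  simp only [] at h1 h2
  omega

def QB (n : ℕ) (h3 : 3 ∣ n) : Finset (ES n) :=
  (Finset.range (2*(n/3))).attach.image
    (fun m => Bedge n m.1 (by
      have hm := Finset.mem_range.1 m.2
      obtain ⟨t, ht⟩ := h3
      omega))

lemma card_QB (h3 : 3 ∣ n) : (QB n h3).card = 2*(n/3) := by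
  rw [QB, Finset.card_image_of_injOn, Finset.card_attach, Finset.card_range]
  intro a _ b _ he
  exact Subtype.ext (Bedge_inj he)

lemma Bedge_mem_QB (h3 : 3 ∣ n) {m : ℕ} (hm : m < 2*(n/3)) (hb : 3*(m/2)+m%2+1 < n) :
    Bedge n m hb ∈ QB n h3 := by
  rw [QB]
  exact Finset.mem_image.2 ⟨⟨m, Finset.mem_range.2 hm⟩, Finset.mem_attach _ _, rfl⟩

lemma pair_eq_iff {α : Type*} [DecidableEq α] {a b c d : α} (hab : a ≠ b) :
    ({a, b} : Finset α) = {c, d} ↔ (a = c ∧ b = d) ∨ (a = d ∧ b = c) := by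
  constructor
  · intro h
    have ha : a ∈ ({c, d} : Finset α) := h ▸ (by simp)
    have hb : b ∈ ({c, d} : Finset α) := h ▸ (by simp)
    simp only [Finset.mem_insert, Finset.mem_singleton] at ha hb
    rcases ha with h1 | h1 <;> rcases hb with h2 | h2 <;> simp_all
  · rintro (⟨rfl, rfl⟩ | ⟨rfl, rfl⟩)
    · rfl
    · exact Finset.pair_comm a b

lemma lr_ne_rr {i : Fin n} {g e : ES n} :
    (Hgraph n).dist (Sum.inl i) (Sum.inr e) ≠ (Hgraph n).dist (Sum.inr g) (Sum.inr e) := by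
  have hx : (Hgraph n).dist (Sum.inl i) (Sum.inr e) = 1 ∨
      (Hgraph n).dist (Sum.inl i) (Sum.inr e) = 3 := by
    by_cases h1 : i ∈ e.1
    · exact Or.inl (dist_lr_mem h1)
    · exact Or.inr (dist_lr_not h1)
  have hy : (Hgraph n).dist (Sum.inr g) (Sum.inr e) = 0 ∨
      (Hgraph n).dist (Sum.inr g) (Sum.inr e) = 2 ∨
      (Hgraph n).dist (Sum.inr g) (Sum.inr e) = 4 := by
    rcases eq_or_ne g e with rfl | hge
    · exact Or.inl SimpleGraph.dist_self
    · rcases Finset.eq_empty_or_nonempty (g.1 ∩ e.1) with hE | ⟨x, hx2⟩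
      · exact Or.inr (Or.inr (dist_rr_disj hE))
      · rw [Finset.mem_inter] at hx2
        exact Or.inr (Or.inl (dist_rr_meet hge hx2.1 hx2.2))
  omega

lemma dist_rr_ne_zero {g e : ES n} (hge : g ≠ e) :
    (Hgraph n).dist (Sum.inr g) (Sum.inr e) ≠ 0 := by
  rcases Finset.eq_empty_or_nonempty (g.1 ∩ e.1) with hE | ⟨x, hx2⟩
  · rw [dist_rr_disj hE]; omega
  · rw [Finset.mem_inter] at hx2
    rw [dist_rr_meet hge hx2.1 hx2.2]; omega


lemma point_rec (k a b c d : ℕ) (hk2 : 2 ≤ k)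
    (ha : a < 3*k) (hb : b < 3*k) (hc : c < 3*k) (hd : d < 3*k)
    (hab : a ≠ b) (hcd : c ≠ d)
    (keyP : ∀ t, t < k →
      (((a = 3*t ∨ a = 3*t+1) ∨ (b = 3*t ∨ b = 3*t+1)) ↔
       ((c = 3*t ∨ c = 3*t+1) ∨ (d = 3*t ∨ d = 3*t+1))))
    (keyR : ∀ t, t < k →
      (((a = 3*t+1 ∨ a = 3*t+1+1) ∨ (b = 3*t+1 ∨ b = 3*t+1+1)) ↔
       ((c = 3*t+1 ∨ c = 3*t+1+1) ∨ (d = 3*t+1 ∨ d = 3*t+1+1))))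
    (hgP : ∀ t, t < k → ¬((a = 3*t ∧ b = 3*t+1) ∨ (a = 3*t+1 ∧ b = 3*t)))
    (hgR : ∀ t, t < k → ¬((a = 3*t+1 ∧ b = 3*t+1+1) ∨ (a = 3*t+1+1 ∧ b = 3*t+1)))
    (hhP : ∀ t, t < k → ¬((c = 3*t ∧ d = 3*t+1) ∨ (c = 3*t+1 ∧ d = 3*t)))
    (hhR : ∀ t, t < k → ¬((c = 3*t+1 ∧ d = 3*t+1+1) ∨ (c = 3*t+1+1 ∧ d = 3*t+1))) :
    a = c ∨ a = d := by
  set t := a/3 with htdef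
  have ht : t < k := by omega
  have hs : a = 3*t ∨ a = 3*t+1 ∨ a = 3*t+2 := by omega
  rcases hs with ha0 | ha1 | ha2
  · have r1 : (c = 3*t ∨ c = 3*t+1) ∨ (d = 3*t ∨ d = 3*t+1) := (keyP t ht).1 (by omega)
    rcases r1 with (h | h) | (h | h)
    · exact Or.inl (by omega)
    · have r2 : (a = 3*t+1 ∨ a = 3*t+1+1) ∨ (b = 3*t+1 ∨ b = 3*t+1+1) := (keyR t ht).2 (by omega)
      have hb2 : b = 3*t+2 := by have := hgP t ht; omega
      by_cases hdt : d/3 = t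
      · have := hhR t ht; right; omega
      · exfalso
        have ht' : d/3 < k := by omega
        have p1 := keyP (d/3) ht'
        have p2 := keyR (d/3) ht'
        omega
    · exact Or.inr (by omega)
    · have r2 : (a = 3*t+1 ∨ a = 3*t+1+1) ∨ (b = 3*t+1 ∨ b = 3*t+1+1) := (keyR t ht).2 (by omega)
      have hb2 : b = 3*t+2 := by have := hgP t ht; omega
      by_cases hct : c/3 = t
      · have := hhR t ht; left; omega
      · exfalso
        have ht' : c/3 < k := by omega
        have p1 := keyP (c/3) ht'
        have p2 := keyR (c/3) ht'
        omega
  · have r1 : (c = 3*t ∨ c = 3*t+1) ∨ (d = 3*t ∨ d = 3*t+1) := (keyP t ht).1 (by omega)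
    have r2 : (c = 3*t+1 ∨ c = 3*t+1+1) ∨ (d = 3*t+1 ∨ d = 3*t+1+1) := (keyR t ht).1 (by omega)
    by_cases h1 : c = 3*t+1
    · exact Or.inl (by omega)
    by_cases h2 : d = 3*t+1
    · exact Or.inr (by omega)
    exfalso
    by_cases hbt : b/3 = t
    · have q1 := hgP t ht
      have q2 := hgR t ht
      omega
    · have ht' : b/3 < k := by omega
      have p1 := keyP (b/3) ht'
      have p2 := keyR (b/3) ht'
      omega
  · have r1 : (c = 3*t+1 ∨ c = 3*t+1+1) ∨ (d = 3*t+1 ∨ d = 3*t+1+1) := (keyR t ht).1 (by omega)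
    rcases r1 with (h | h) | (h | h)
    · have r2 : (a = 3*t ∨ a = 3*t+1) ∨ (b = 3*t ∨ b = 3*t+1) := (keyP t ht).2 (by omega)
      have hb2 : b = 3*t := by have := hgR t ht; omega
      by_cases hdt : d/3 = t
      · have := hhP t ht; right; omega
      · exfalso
        have ht' : d/3 < k := by omega
        have p1 := keyP (d/3) ht'
        have p2 := keyR (d/3) ht'
        omega
    · exact Or.inl (by omega)
    · have r2 : (a = 3*t ∨ a = 3*t+1) ∨ (b = 3*t ∨ b = 3*t+1) := (keyP t ht).2 (by omega)
      have hb2 : b = 3*t := by have := hgR t ht; omega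
      by_cases hct : c/3 = t
      · have := hhP t ht; left; omega
      · exfalso
        have ht' : c/3 < k := by omega
        have p1 := keyP (c/3) ht'
        have p2 := keyR (c/3) ht'
        omega
    · exact Or.inr (by omega)

set_option maxHeartbeats 4000000 in
lemma ub (hn : 6 ≤ n) (h3 : 3 ∣ n) :
    ∃ Q, IsResolving (Hgraph n) Q ∧ Q.card = n - n / 3 := by
  classical
  obtain ⟨k, hk⟩ := h3
  have h3' : 3 ∣ n := ⟨k, hk⟩
  have hdiv : n / 3 = k := by omega
  refine ⟨(QB n h3').image Sum.inr, ?_, ?_⟩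
  swap
  · rw [Finset.card_image_of_injective _ Sum.inr_injective, card_QB]
    omega
  intro x y hxy
  have H : ∀ e ∈ QB n h3', (Hgraph n).dist x (Sum.inr e) = (Hgraph n).dist y (Sum.inr e) :=
    fun e he => hxy _ (Finset.mem_image_of_mem _ he)
  cases x with
  | inl i =>
    cases y with
    | inr g =>
      exfalso
      have hb0 : 3*(0/2)+0%2+1 < n := by omega
      have hd := H (Bedge n 0 hb0) (Bedge_mem_QB h3' (by omega) hb0)
      exact lr_ne_rr hd
    | inl j =>
      have hmem : ∀ e ∈ QB n h3', (i ∈ e.1 ↔ j ∈ e.1) := by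
        intro e he
        have hd := H e he
        by_cases h1 : i ∈ e.1 <;> by_cases h2 : j ∈ e.1
        · tauto
        · rw [dist_lr_mem h1, dist_lr_not h2] at hd; omega
        · rw [dist_lr_not h1, dist_lr_mem h2] at hd; omega
        · tauto
      have hi := i.isLt
      have hj := j.isLt
      have key : ∀ m, m < 2*k → (3*(m/2)+m%2+1 < n) := by omega
      have e1 : _ := hmem _ (Bedge_mem_QB h3' (m := 2*(i.val/3))
        (by rw [hdiv]; omega) (key _ (by omega)))
      have e2 : _ := hmem _ (Bedge_mem_QB h3' (m := 2*(i.val/3)+1)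
        (by rw [hdiv]; omega) (key _ (by omega)))
      rw [mem_Bedge, mem_Bedge] at e1
      rw [mem_Bedge, mem_Bedge] at e2
      congr 1
      exact Fin.ext (by omega)
  | inr g =>
    cases y with
    | inl i =>
      exfalso
      have hb0 : 3*(0/2)+0%2+1 < n := by omega
      have hd := H (Bedge n 0 hb0) (Bedge_mem_QB h3' (by omega) hb0)
      exact lr_ne_rr hd.symm
    | inr h' =>
      by_cases hgQ : g ∈ QB n h3'
      · have hd := H g hgQ
        rw [SimpleGraph.dist_self] at hd
        rcases eq_or_ne h' g with rfl | hne
        · rfl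
        · exact absurd hd.symm (dist_rr_ne_zero hne)
      by_cases hhQ : h' ∈ QB n h3'
      · have hd := H h' hhQ
        rw [SimpleGraph.dist_self] at hd
        rcases eq_or_ne g h' with rfl | hne
        · rfl
        · exact absurd hd (dist_rr_ne_zero hne)
      -- both not in QB
      have hiff : ∀ e ∈ QB n h3',
          ((g.1 ∩ e.1).Nonempty ↔ (h'.1 ∩ e.1).Nonempty) := by
        intro e he
        have hd := H e he
        have hge : g ≠ e := fun hq => hgQ (hq ▸ he)
        have hhe : h' ≠ e := fun hq => hhQ (hq ▸ he)
        rcases Finset.eq_empty_or_nonempty (g.1 ∩ e.1) with hE1 | hN1 <;>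
          rcases Finset.eq_empty_or_nonempty (h'.1 ∩ e.1) with hE2 | hN2
        · simp [hE1, hE2]
        · exfalso
          obtain ⟨x2, hx2⟩ := hN2
          rw [Finset.mem_inter] at hx2
          rw [dist_rr_disj hE1, dist_rr_meet hhe hx2.1 hx2.2] at hd
          omega
        · exfalso
          obtain ⟨x2, hx2⟩ := hN1
          rw [Finset.mem_inter] at hx2
          rw [dist_rr_meet hge hx2.1 hx2.2, dist_rr_disj hE2] at hd
          omega
        · simp [hN1, hN2]
      obtain ⟨u, v, huv, hg⟩ := Finset.card_eq_two.1 g.2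
      obtain ⟨u', v', huv', hh⟩ := Finset.card_eq_two.1 h'.2
      have hgmeet : ∀ (e : ES n), ((g.1 ∩ e.1).Nonempty ↔ (u ∈ e.1 ∨ v ∈ e.1)) := by
        intro e
        rw [hg]
        constructor
        · rintro ⟨x2, hx2⟩
          rw [Finset.mem_inter, Finset.mem_insert, Finset.mem_singleton] at hx2
          rcases hx2 with ⟨rfl | rfl, hm⟩ <;> tauto
        · rintro (hm | hm)
          · exact ⟨u, by simp [hm]⟩
          · exact ⟨v, by simp [hm]⟩
      have hhmeet : ∀ (e : ES n), ((h'.1 ∩ e.1).Nonempty ↔ (u' ∈ e.1 ∨ v' ∈ e.1)) := by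
        intro e
        rw [hh]
        constructor
        · rintro ⟨x2, hx2⟩
          rw [Finset.mem_inter, Finset.mem_insert, Finset.mem_singleton] at hx2
          rcases hx2 with ⟨rfl | rfl, hm⟩ <;> tauto
        · rintro (hm | hm)
          · exact ⟨u', by simp [hm]⟩
          · exact ⟨v', by simp [hm]⟩
      have hk2 : 2 ≤ k := by omega
      have hgnm : ∀ (m : ℕ) (hb : 3*(m/2)+m%2+1 < n), m < 2*k →
          ¬((u.val = 3*(m/2)+m%2 ∧ v.val = 3*(m/2)+m%2+1) ∨
            (u.val = 3*(m/2)+m%2+1 ∧ v.val = 3*(m/2)+m%2)) := by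
        intro m hb hm hc
        apply hgQ
        have : g = Bedge n m hb := by
          apply Subtype.ext
          rw [hg, Bedge, pair_eq_iff huv]
          simp only [Fin.ext_iff]
          exact hc
        exact this ▸ Bedge_mem_QB h3' (by omega) hb
      have hhnm : ∀ (m : ℕ) (hb : 3*(m/2)+m%2+1 < n), m < 2*k →
          ¬((u'.val = 3*(m/2)+m%2 ∧ v'.val = 3*(m/2)+m%2+1) ∨
            (u'.val = 3*(m/2)+m%2+1 ∧ v'.val = 3*(m/2)+m%2)) := by
        intro m hb hm hc
        apply hhQ
        have : h' = Bedge n m hb := by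
          apply Subtype.ext
          rw [hh, Bedge, pair_eq_iff huv']
          simp only [Fin.ext_iff]
          exact hc
        exact this ▸ Bedge_mem_QB h3' (by omega) hb
      have hEP : ∀ t : ℕ, 3*((2*t)/2)+((2*t)%2) = 3*t := by intro t; omega
      have hER : ∀ t : ℕ, 3*((2*t+1)/2)+((2*t+1)%2) = 3*t+1 := by intro t; omega
      have keyP : ∀ t, t < k →
          (((u.val = 3*t ∨ u.val = 3*t+1) ∨ (v.val = 3*t ∨ v.val = 3*t+1)) ↔
           ((u'.val = 3*t ∨ u'.val = 3*t+1) ∨ (v'.val = 3*t ∨ v'.val = 3*t+1))) := by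
        intro t ht
        have hb : 3*((2*t)/2)+((2*t)%2)+1 < n := by omega
        have h6 := hiff (Bedge n (2*t) hb) (Bedge_mem_QB h3' (by omega) hb)
        rw [hgmeet, hhmeet, mem_Bedge, mem_Bedge, mem_Bedge, mem_Bedge, hEP t] at h6
        exact h6
      have keyR : ∀ t, t < k →
          (((u.val = 3*t+1 ∨ u.val = 3*t+1+1) ∨ (v.val = 3*t+1 ∨ v.val = 3*t+1+1)) ↔
           ((u'.val = 3*t+1 ∨ u'.val = 3*t+1+1) ∨ (v'.val = 3*t+1 ∨ v'.val = 3*t+1+1))) := by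
        intro t ht
        have hb : 3*((2*t+1)/2)+((2*t+1)%2)+1 < n := by omega
        have h6 := hiff (Bedge n (2*t+1) hb) (Bedge_mem_QB h3' (by omega) hb)
        rw [hgmeet, hhmeet, mem_Bedge, mem_Bedge, mem_Bedge, mem_Bedge, hER t] at h6
        exact h6
      have hgP : ∀ t, t < k →
          ¬((u.val = 3*t ∧ v.val = 3*t+1) ∨ (u.val = 3*t+1 ∧ v.val = 3*t)) := by
        intro t ht
        have h7 := hgnm (2*t) (by omega) (by omega)
        rw [hEP t] at h7
        exact h7
      have hgR : ∀ t, t < k →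
          ¬((u.val = 3*t+1 ∧ v.val = 3*t+1+1) ∨ (u.val = 3*t+1+1 ∧ v.val = 3*t+1)) := by
        intro t ht
        have h7 := hgnm (2*t+1) (by omega) (by omega)
        rw [hER t] at h7
        exact h7
      have hhP : ∀ t, t < k →
          ¬((u'.val = 3*t ∧ v'.val = 3*t+1) ∨ (u'.val = 3*t+1 ∧ v'.val = 3*t)) := by
        intro t ht
        have h7 := hhnm (2*t) (by omega) (by omega)
        rw [hEP t] at h7
        exact h7
      have hhR : ∀ t, t < k →
          ¬((u'.val = 3*t+1 ∧ v'.val = 3*t+1+1) ∨ (u'.val = 3*t+1+1 ∧ v'.val = 3*t+1)) := by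
        intro t ht
        have h7 := hhnm (2*t+1) (by omega) (by omega)
        rw [hER t] at h7
        exact h7
      have hu := u.isLt
      have hv := v.isLt
      have hu' := u'.isLt
      have hv' := v'.isLt
      have huvne : u.val ≠ v.val := fun hq => huv (Fin.ext hq)
      have huvne' : u'.val ≠ v'.val := fun hq => huv' (Fin.ext hq)
      have m1 : u.val = u'.val ∨ u.val = v'.val :=
        point_rec k u.val v.val u'.val v'.val hk2 (by omega) (by omega) (by omega) (by omega)
          huvne huvne' keyP keyR hgP hgR hhP hhR
      have m2 : v.val = u'.val ∨ v.val = v'.val :=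
        point_rec k v.val u.val u'.val v'.val hk2 (by omega) (by omega) (by omega) (by omega)
          (Ne.symm huvne) huvne'
          (fun t ht => or_comm.trans (keyP t ht))
          (fun t ht => or_comm.trans (keyR t ht))
          (fun t ht h => h.elim (fun hx => hgP t ht (Or.inr ⟨hx.2, hx.1⟩))
            (fun hx => hgP t ht (Or.inl ⟨hx.2, hx.1⟩)))
          (fun t ht h => h.elim (fun hx => hgR t ht (Or.inr ⟨hx.2, hx.1⟩))
            (fun hx => hgR t ht (Or.inl ⟨hx.2, hx.1⟩)))
          hhP hhR
      have goal2 : (u.val = u'.val ∧ v.val = v'.val) ∨ (u.val = v'.val ∧ v.val = u'.val) := by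
        omega
      congr 1
      apply Subtype.ext
      rw [hg, hh, pair_eq_iff huv]
      simp only [Fin.ext_iff]
      exact goal2

lemma lb (Q : Finset (Fin n ⊕ ES n)) (h3 : 3 ∣ n) (hres : IsResolving (Hgraph n) Q) :
    n - n / 3 ≤ Q.card := by
  classical
  set A : Finset (Fin n) := Finset.univ.filter (fun i => Sum.inl i ∈ Q) with hA
  set B : Finset (ES n) := Finset.univ.filter (fun e => Sum.inr e ∈ Q) with hB
  have hcard : Q.card = A.card + B.card := by
    have hQ : Q = A.image Sum.inl ∪ B.image Sum.inr := by
      ext x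
      cases x with
      | inl i => simp [hA, hB]
      | inr e => simp [hA, hB]
    rw [hQ, Finset.card_union_of_disjoint, Finset.card_image_of_injective _ Sum.inl_injective,
      Finset.card_image_of_injective _ Sum.inr_injective]
    rw [Finset.disjoint_left]
    rintro x hx hy
    obtain ⟨i, -, rfl⟩ := Finset.mem_image.1 hx
    obtain ⟨e, -, he⟩ := Finset.mem_image.1 hy
    exact Sum.inr_ne_inl he
  rw [hcard]
  refine LBcount h3 A B ?_
  intro i j hiA hjA hij
  by_contra hc
  push_neg at hc
  refine hij (Sum.inl_injective (hres (Sum.inl i) (Sum.inl j) ?_))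
  intro q hq
  cases q with
  | inl a =>
    have hai : i ≠ a := by rintro rfl; exact hiA (Finset.mem_filter.2 ⟨Finset.mem_univ _, hq⟩)
    have haj : j ≠ a := by rintro rfl; exact hjA (Finset.mem_filter.2 ⟨Finset.mem_univ _, hq⟩)
    rw [dist_ll hai, dist_ll haj]
  | inr e =>
    have heB : e ∈ B := Finset.mem_filter.2 ⟨Finset.mem_univ _, hq⟩
    have hiff := hc e heB
    by_cases h1 : i ∈ e.1
    · rw [dist_lr_mem h1, dist_lr_mem (hiff.1 h1)]
    · rw [dist_lr_not h1, dist_lr_not (fun hm => h1 (hiff.2 hm))]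

theorem stmt17 (n : ℕ) (hn : 6 ≤ n) (h3 : 3 ∣ n) :
    IsLeast {m : ℕ | ∃ Q, IsResolving (Hgraph n) Q ∧ Q.card = m} (n - n / 3) := by
  constructor
  · obtain ⟨Q, h1, h2⟩ := ub hn h3
    exact ⟨Q, h1, h2⟩
  · rintro m ⟨Q, hres, rfl⟩
    exact lb Q h3 hres
end

section
/- For n ≥ 5, the metric dimension of the line graph L(n) of H(n) is n − 2. -/
set_option maxHeartbeats 1000000


open SimpleGraph

/-- The line graph `L(n)` of `H(n)`: vertices are incident pairs `(r, {i,j})` with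
`r ∈ {i,j}`, adjacent iff they agree in the first or second coordinate. -/
def Lgraph (n : ℕ) :
    SimpleGraph {p : Fin n × {s : Finset (Fin n) // s.card = 2} // p.1 ∈ p.2.1} :=
  SimpleGraph.fromRel (fun p q => p.1.1 = q.1.1 ∨ p.1.2 = q.1.2)

namespace Stmt18Aux

def Dn (A B C E : ℕ) : ℕ :=
  if A = C ∧ B = E then 0
  else if A = C ∨ (A = E ∧ B = C) then 1
  else if A = E ∨ B = C then 2
  else 3

lemma Dn_eq_zero_iff (A B C E : ℕ) : Dn A B C E = 0 ↔ (A = C ∧ B = E) := by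
  unfold Dn; split_ifs with h1 h2 h3
  · exact iff_of_true rfl h1
  all_goals exact iff_of_false (by norm_num) h1

lemma Dn_le_one_iff (A B C E : ℕ) : Dn A B C E ≤ 1 ↔ (A = C ∨ (A = E ∧ B = C)) := by
  unfold Dn; split_ifs with h1 h2 h3
  · exact iff_of_true (by omega) (Or.inl h1.1)
  · exact iff_of_true (by omega) h2
  all_goals exact iff_of_false (by omega) h2

lemma Dn_le_two_iff (A B C E : ℕ) : Dn A B C E ≤ 2 ↔ (A = C ∨ A = E ∨ B = C) := by
  unfold Dn; split_ifs with h1 h2 h3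
  · exact iff_of_true (by omega) (Or.inl h1.1)
  · exact iff_of_true (by omega) (by tauto)
  · exact iff_of_true (by omega) (Or.inr h3)
  · exact iff_of_false (by omega) (by tauto)

lemma DnL1 (A B C E F : ℕ) : Dn A B C E ≤ Dn A F C E + 1 := by
  unfold Dn; split_ifs <;> omega

lemma DnL2 (A B C E : ℕ) : Dn A B C E ≤ Dn B A C E + 1 := by
  unfold Dn; split_ifs <;> omega

lemma Dn_self (A B : ℕ) : Dn A B A B = 0 := by
  unfold Dn; simp

lemma decode (n A B A' B' : ℕ) (hn : 5 ≤ n)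
    (hA : A < n) (hB : B < n) (hA' : A' < n) (hB' : B' < n)
    (hab : A ≠ B) (hab' : A' ≠ B')
    (H : ∀ m, m < n - 2 → Dn A B m (n-1) = Dn A' B' m (n-1)) :
    A = A' ∧ B = B' := by
  have E0 : ∀ m, m < n-2 → ((A = m ∧ B = n-1) ↔ (A' = m ∧ B' = n-1)) := by
    intro m hm; rw [← Dn_eq_zero_iff A B m (n-1), ← Dn_eq_zero_iff A' B' m (n-1), H m hm]
  have E1 : ∀ m, m < n-2 → ((A = m ∨ (A = n-1 ∧ B = m)) ↔ (A' = m ∨ (A' = n-1 ∧ B' = m))) := by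
    intro m hm; rw [← Dn_le_one_iff A B m (n-1), ← Dn_le_one_iff A' B' m (n-1), H m hm]
  have E2 : ∀ m, m < n-2 → ((A = m ∨ A = n-1 ∨ B = m) ↔ (A' = m ∨ A' = n-1 ∨ B' = m)) := by
    intro m hm; rw [← Dn_le_two_iff A B m (n-1), ← Dn_le_two_iff A' B' m (n-1), H m hm]
  have e20 := E2 0 (by omega)
  have e21 := E2 1 (by omega)
  have e22 := E2 2 (by omega)
  have hw : A = n-1 ↔ A' = n-1 := by omega
  rcases Nat.lt_or_ge A (n-2) with hAlt | hAge
  · have h1 := E1 A hAlt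
    have hAA : A' = A := by omega
    subst hAA
    have h0 := E0 A' hAlt
    rcases Nat.lt_or_ge B (n-2) with hBlt | hBge
    · have h2 := E2 B hBlt
      exact ⟨rfl, by omega⟩
    · rcases Nat.lt_or_ge B' (n-2) with hBlt' | hBge'
      · have h2 := E2 B' hBlt'
        exact ⟨rfl, by omega⟩
      · exact ⟨rfl, by omega⟩
  · rcases Nat.lt_or_ge A' (n-2) with hAlt' | hAge'
    · have h1 := E1 A' hAlt'
      exact absurd (by omega : A = A') (by omega)
    · have hAA : A = A' := by omega
      subst hAA
      rcases Nat.lt_or_ge B (n-2) with hBlt | hBge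
      · have h2 := E2 B hBlt
        have h1 := E1 B hBlt
        have h0 := E0 B hBlt
        exact ⟨rfl, by omega⟩
      · rcases Nat.lt_or_ge B' (n-2) with hBlt' | hBge'
        · have h2 := E2 B' hBlt'
          have h1 := E1 B' hBlt'
          have h0 := E0 B' hBlt'
          exact ⟨rfl, by omega⟩
        · have h0' : B = n-1 ↔ B' = n-1 := by
            rcases Nat.lt_or_ge A (n-2) with h | h
            · have := E0 A h; omega
            · omega
          exact ⟨rfl, by omega⟩

variable {n : ℕ}

abbrev LV (n : ℕ) := {p : Fin n × {s : Finset (Fin n) // s.card = 2} // p.1 ∈ p.2.1}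

lemma pair_card {a b : Fin n} (h : a ≠ b) : ({a, b} : Finset (Fin n)).card = 2 := by
  rw [Finset.card_insert_of_notMem (by simp [h]), Finset.card_singleton]

def vmk (a b : Fin n) (h : a ≠ b) : LV n :=
  ⟨(a, ⟨{a, b}, pair_card h⟩), by simp⟩

def fa (u : LV n) : Fin n := u.1.1

lemma erase_nonempty (u : LV n) : (u.1.2.1.erase u.1.1).Nonempty := by
  rw [← Finset.card_pos, Finset.card_erase_of_mem u.2, u.1.2.2]
  norm_num

def fb (u : LV n) : Fin n := (u.1.2.1.erase u.1.1).min' (erase_nonempty u)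

lemma fa_vmk (a b : Fin n) (h : a ≠ b) : fa (vmk a b h) = a := rfl

lemma fb_mem_erase (u : LV n) : fb u ∈ u.1.2.1.erase u.1.1 := Finset.min'_mem _ _

lemma fa_ne_fb (u : LV n) : fa u ≠ fb u :=
  fun h => (Finset.mem_erase.mp (fb_mem_erase u)).1 h.symm

lemma fb_vmk (a b : Fin n) (h : a ≠ b) : fb (vmk a b h) = b := by
  have h1 := fb_mem_erase (vmk a b h)
  rw [Finset.mem_erase] at h1
  have h2 : fb (vmk a b h) ∈ ({a, b} : Finset (Fin n)) := h1.2
  rw [Finset.mem_insert, Finset.mem_singleton] at h2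
  rcases h2 with h2 | h2
  · exact absurd h2 h1.1
  · exact h2

lemma set_eq_pair (u : LV n) : u.1.2.1 = {fa u, fb u} := by
  refine (Finset.eq_of_subset_of_card_le ?_ ?_).symm
  · intro x hx
    rw [Finset.mem_insert, Finset.mem_singleton] at hx
    rcases hx with rfl | rfl
    · exact u.2
    · exact (Finset.mem_erase.mp (fb_mem_erase u)).2
  · rw [u.1.2.2, pair_card (fa_ne_fb u)]

lemma vmk_eta (u : LV n) : vmk (fa u) (fb u) (fa_ne_fb u) = u := by
  refine Subtype.ext (Prod.ext rfl (Subtype.ext ?_))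
  exact (set_eq_pair u).symm

lemma exists_vmk (u : LV n) : ∃ a b, ∃ h : a ≠ b, u = vmk a b h :=
  ⟨fa u, fb u, fa_ne_fb u, (vmk_eta u).symm⟩

lemma vmk_eq_iff {a b c d : Fin n} (hab : a ≠ b) (hcd : c ≠ d) :
    vmk a b hab = vmk c d hcd ↔ (a = c ∧ b = d) := by
  constructor
  · intro h
    constructor
    · have := congrArg fa h; rwa [fa_vmk, fa_vmk] at this
    · have := congrArg fb h; rwa [fb_vmk, fb_vmk] at this
  · rintro ⟨rfl, rfl⟩; rfl

lemma snd_eq_iff {a b c d : Fin n} (hab : a ≠ b) (hcd : c ≠ d) :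
    (vmk a b hab).1.2 = (vmk c d hcd).1.2 ↔ ((a = c ∧ b = d) ∨ (a = d ∧ b = c)) := by
  rw [Subtype.ext_iff]
  show ({a, b} : Finset (Fin n)) = {c, d} ↔ _
  rw [← Finset.coe_inj]
  simp only [Finset.coe_insert, Finset.coe_singleton]
  exact Set.pair_eq_pair_iff

lemma adj_iff {a b c d : Fin n} (hab : a ≠ b) (hcd : c ≠ d) :
    (Lgraph n).Adj (vmk a b hab) (vmk c d hcd) ↔ ((a = c ∧ b ≠ d) ∨ (a = d ∧ b = c)) := by
  show (SimpleGraph.fromRel _).Adj _ _ ↔ _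
  rw [SimpleGraph.fromRel_adj]
  have hfst : (vmk a b hab).1.1 = a := rfl
  have hfst' : (vmk c d hcd).1.1 = c := rfl
  rw [ne_eq, vmk_eq_iff hab hcd]
  constructor
  · rintro ⟨hne, h | h⟩ <;> rw [hfst, hfst'] at h
    · rcases h with h | h
      · exact Or.inl ⟨h, fun hbd => hne ⟨h, hbd⟩⟩
      · rcases (snd_eq_iff hab hcd).mp h with h' | h'
        · exact Or.inl ⟨h'.1, fun hbd => hne ⟨h'.1, hbd⟩⟩
        · exact Or.inr h'
    · rcases h with h | h
      · exact Or.inl ⟨h.symm, fun hbd => hne ⟨h.symm, hbd⟩⟩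
      · rcases (snd_eq_iff hcd hab).mp h with h' | h'
        · exact Or.inl ⟨h'.1.symm, fun hbd => hne ⟨h'.1.symm, hbd⟩⟩
        · exact Or.inr ⟨h'.2.symm, h'.1.symm⟩
  · rintro (⟨rfl, hbd⟩ | ⟨rfl, rfl⟩)
    · exact ⟨fun h => hbd h.2, Or.inl (Or.inl rfl)⟩
    · refine ⟨fun h => hab h.1, Or.inl (Or.inr ?_)⟩
      exact (snd_eq_iff hab hcd).mpr (Or.inr ⟨rfl, rfl⟩)

lemma walk_lower : ∀ {u v : LV n} (p : (Lgraph n).Walk u v),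
    Dn (fa u).1 (fb u).1 (fa v).1 (fb v).1 ≤ p.length := by
  intro u v p
  induction p with
  | nil => simp [Dn_self]
  | @cons x y z h p ih =>
    have h' := h
    rw [← vmk_eta x, ← vmk_eta y] at h'
    rw [adj_iff] at h'
    rw [SimpleGraph.Walk.length_cons]
    rcases h' with ⟨h1, _⟩ | ⟨h1, h2⟩
    · calc Dn (fa x).1 (fb x).1 (fa z).1 (fb z).1
          ≤ Dn (fa x).1 (fb y).1 (fa z).1 (fb z).1 + 1 := DnL1 _ _ _ _ _
        _ = Dn (fa y).1 (fb y).1 (fa z).1 (fb z).1 + 1 := by rw [h1]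
        _ ≤ p.length + 1 := Nat.add_le_add_right ih 1
    · calc Dn (fa x).1 (fb x).1 (fa z).1 (fb z).1
          ≤ Dn (fb x).1 (fa x).1 (fa z).1 (fb z).1 + 1 := DnL2 _ _ _ _
        _ = Dn (fa y).1 (fb y).1 (fa z).1 (fb z).1 + 1 := by rw [← h1, ← h2]
        _ ≤ p.length + 1 := Nat.add_le_add_right ih 1

lemma dist_eq_of_walk {a b c d : Fin n} (hab : a ≠ b) (hcd : c ≠ d)
    (w : (Lgraph n).Walk (vmk a b hab) (vmk c d hcd))
    (hlen : w.length = Dn a.1 b.1 c.1 d.1) :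
    (Lgraph n).dist (vmk a b hab) (vmk c d hcd) = Dn a.1 b.1 c.1 d.1 := by
  refine le_antisymm (hlen ▸ SimpleGraph.dist_le w) ?_
  have hr : (Lgraph n).Reachable (vmk a b hab) (vmk c d hcd) := ⟨w⟩
  obtain ⟨p, hp⟩ := hr.exists_walk_length_eq_dist
  rw [← hp]
  have := walk_lower p
  rwa [fa_vmk, fb_vmk, fa_vmk, fb_vmk] at this

lemma fin_ne_of_val_ne {a b : Fin n} (h : a.1 ≠ b.1) : a ≠ b := fun h' => h (by rw [h'])

lemma fin_eq_of_val_eq {a b : Fin n} (h : a.1 = b.1) : a = b := Fin.ext h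

lemma dist_vmk {a b c d : Fin n} (hab : a ≠ b) (hcd : c ≠ d) :
    (Lgraph n).dist (vmk a b hab) (vmk c d hcd) = Dn a.1 b.1 c.1 d.1 := by
  by_cases h1 : a.1 = c.1 ∧ b.1 = d.1
  · have : vmk a b hab = vmk c d hcd :=
      (vmk_eq_iff hab hcd).mpr ⟨fin_eq_of_val_eq h1.1, fin_eq_of_val_eq h1.2⟩
    rw [this, SimpleGraph.dist_self]
    unfold Dn; rw [if_pos h1]
  · by_cases h2 : a.1 = c.1 ∨ (a.1 = d.1 ∧ b.1 = c.1)
    · -- adjacent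
      have hadj : (Lgraph n).Adj (vmk a b hab) (vmk c d hcd) := by
        rw [adj_iff]
        rcases h2 with h2 | h2
        · exact Or.inl ⟨fin_eq_of_val_eq h2, fun h => h1 ⟨h2, by rw [h]⟩⟩
        · exact Or.inr ⟨fin_eq_of_val_eq h2.1, fin_eq_of_val_eq h2.2⟩
      refine dist_eq_of_walk hab hcd (SimpleGraph.Walk.cons hadj SimpleGraph.Walk.nil) ?_
      rw [SimpleGraph.Walk.length_cons, SimpleGraph.Walk.length_nil]
      unfold Dn; rw [if_neg h1, if_pos h2]
    · by_cases h3 : a.1 = d.1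
      · -- distance 2 via (a,b) - (a,c) - (c,d)  [c=? d=a]
        have hac : a ≠ c := fin_ne_of_val_ne (fun h => h2 (Or.inl h))
        have hbc : b ≠ c := fin_ne_of_val_ne (fun h => h2 (Or.inr ⟨h3, h⟩))
        have had : a = d := fin_eq_of_val_eq h3
        refine dist_eq_of_walk hab hcd
          (SimpleGraph.Walk.cons ((adj_iff hab hac).mpr (Or.inl ⟨rfl, hbc⟩))
            (SimpleGraph.Walk.cons ((adj_iff hac hcd).mpr (Or.inr ⟨had, rfl⟩))
              SimpleGraph.Walk.nil))
          ?_
        simp only [SimpleGraph.Walk.length_cons, SimpleGraph.Walk.length_nil]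
        unfold Dn; rw [if_neg h1, if_neg h2, if_pos (Or.inl h3)]
      · by_cases h4 : b.1 = c.1
        · -- distance 2 via (a,b) - (b,a) - (c,d)   [b=c]
          have hbc : b = c := fin_eq_of_val_eq h4
          have had : a ≠ d := fin_ne_of_val_ne h3
          refine dist_eq_of_walk hab hcd
            (SimpleGraph.Walk.cons ((adj_iff hab hab.symm).mpr (Or.inr ⟨rfl, rfl⟩))
              (SimpleGraph.Walk.cons ((adj_iff hab.symm hcd).mpr (Or.inl ⟨hbc, had⟩))
                SimpleGraph.Walk.nil))
            ?_
          simp only [SimpleGraph.Walk.length_cons, SimpleGraph.Walk.length_nil]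
          unfold Dn; rw [if_neg h1, if_neg h2, if_pos (Or.inr h4)]
        · -- distance 3 via (a,b) - (a,c) - (c,a) - (c,d)
          have hac : a ≠ c := fin_ne_of_val_ne (fun h => h2 (Or.inl h))
          have hbc : b ≠ c := fin_ne_of_val_ne h4
          have had : a ≠ d := fin_ne_of_val_ne h3
          refine dist_eq_of_walk hab hcd
            (SimpleGraph.Walk.cons ((adj_iff hab hac).mpr (Or.inl ⟨rfl, hbc⟩))
              (SimpleGraph.Walk.cons ((adj_iff hac hac.symm).mpr (Or.inr ⟨rfl, rfl⟩))
                (SimpleGraph.Walk.cons ((adj_iff hac.symm hcd).mpr (Or.inl ⟨rfl, had⟩))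
                  SimpleGraph.Walk.nil)))
            ?_
          simp only [SimpleGraph.Walk.length_cons, SimpleGraph.Walk.length_nil]
          unfold Dn
          rw [if_neg h1, if_neg h2, if_neg (fun h => by rcases h with h | h; exact h3 h; exact h4 h)]

lemma lower_aux (J1 J2 J3 C E : ℕ) (hc1 : C ≠ J1) (hc2 : C ≠ J2) (hc3 : C ≠ J3) :
    Dn J1 J2 C E = Dn J1 J3 C E := by
  unfold Dn; split_ifs <;> omega

def wv (n : ℕ) (hn : 5 ≤ n) : Fin n := ⟨n - 1, by omega⟩

def f (n : ℕ) (hn : 5 ≤ n) (i : Fin (n - 2)) : LV n :=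
  vmk ⟨i.1, by have := i.2; omega⟩ (wv n hn)
    (fin_ne_of_val_ne (show i.1 ≠ n - 1 by have := i.2; omega))

lemma f_inj (n : ℕ) (hn : 5 ≤ n) : Function.Injective (f n hn) := by
  intro i j h
  unfold f at h
  have h1 := ((vmk_eq_iff _ _).mp h).1
  exact Fin.ext (by simpa using h1)

def Qset (n : ℕ) (hn : 5 ≤ n) : Finset (LV n) := Finset.image (f n hn) Finset.univ

lemma Q_card (n : ℕ) (hn : 5 ≤ n) : (Qset n hn).card = n - 2 := by
  rw [Qset, Finset.card_image_of_injective _ (f_inj n hn), Finset.card_univ, Fintype.card_fin]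

lemma Q_resolving (n : ℕ) (hn : 5 ≤ n) : IsResolving (Lgraph n) (Qset n hn) := by
  intro x y hxy
  obtain ⟨a, b, hab, rfl⟩ := exists_vmk x
  obtain ⟨a', b', hab', rfl⟩ := exists_vmk y
  have H : ∀ m, m < n - 2 → Dn a.1 b.1 m (n-1) = Dn a'.1 b'.1 m (n-1) := by
    intro m hm
    have hq : f n hn ⟨m, hm⟩ ∈ Qset n hn := Finset.mem_image_of_mem _ (Finset.mem_univ _)
    have hd := hxy _ hq
    unfold f at hd
    rw [dist_vmk, dist_vmk] at hd
    exact hd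
  have hd := decode n a.1 b.1 a'.1 b'.1 hn a.2 b.2 a'.2 b'.2
      (fun h => hab (fin_eq_of_val_eq h)) (fun h => hab' (fin_eq_of_val_eq h)) H
  rw [vmk_eq_iff]
  exact ⟨fin_eq_of_val_eq hd.1, fin_eq_of_val_eq hd.2⟩

lemma lower_bound (n : ℕ) (hn : 5 ≤ n) (Q : Finset (LV n))
    (hQ : IsResolving (Lgraph n) Q) : n - 2 ≤ Q.card := by
  by_contra hcon
  push_neg at hcon
  have hFcard : (Q.image fa).card ≤ Q.card := Finset.card_image_le
  have h3 : 3 ≤ (Finset.univ \ Q.image fa).card := by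
    rw [Finset.card_sdiff_of_subset (Finset.subset_univ _), Finset.card_univ, Fintype.card_fin]
    omega
  obtain ⟨t, hts, htc⟩ := Finset.exists_subset_card_eq h3
  obtain ⟨j1, j2, j3, h12, h13, h23, rfl⟩ := Finset.card_eq_three.mp htc
  have hj : ∀ j ∈ ({j1, j2, j3} : Finset (Fin n)), j ∉ Q.image fa :=
    fun j hj => (Finset.mem_sdiff.mp (hts hj)).2
  have hj1 : j1 ∉ Q.image fa := hj j1 (by simp)
  have hj2 : j2 ∉ Q.image fa := hj j2 (by simp)
  have hj3 : j3 ∉ Q.image fa := hj j3 (by simp)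
  have key : vmk j1 j2 h12 = vmk j1 j3 h13 := by
    apply hQ
    intro q hq
    obtain ⟨c, d, hcd, rfl⟩ := exists_vmk q
    have hcF : c ∈ Q.image fa := by
      have := Finset.mem_image_of_mem fa hq
      rwa [fa_vmk] at this
    rw [dist_vmk, dist_vmk]
    refine lower_aux j1.1 j2.1 j3.1 c.1 d.1 ?_ ?_ ?_
    · exact fun h => hj1 (fin_eq_of_val_eq h ▸ hcF)
    · exact fun h => hj2 (fin_eq_of_val_eq h ▸ hcF)
    · exact fun h => hj3 (fin_eq_of_val_eq h ▸ hcF)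
  exact h23 ((vmk_eq_iff h12 h13).mp key).2

end Stmt18Aux

theorem stmt18 (n : ℕ) (hn : 5 ≤ n) :
    IsLeast {m : ℕ | ∃ Q, IsResolving (Lgraph n) Q ∧ Q.card = m} (n - 2) := by
  constructor
  · exact ⟨Stmt18Aux.Qset n hn, Stmt18Aux.Q_resolving n hn, Stmt18Aux.Q_card n hn⟩
  · rintro m ⟨Q, hQ, rfl⟩
    exact Stmt18Aux.lower_bound n hn Q hQ
end
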